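/- Let G=(V,E) be an undirected unweighted graph, p* an s–t path in G with edge sequence e1,…,eℓ, and let Ĝ be the augmented line graph of G with respect to s and t, with target path p̂* = (ŝ, e1, …, eℓ, t̂). Then the minimum size of a Force Path Remove solution for (Ĝ, p̂*) equals the minimum size of a Force Path Cut solution for (G, p*) (assuming a Force Path Cut solution exists); in particular, if V̂' is a minimum-size Force Path Remove solution for (Ĝ, p̂*), then V̂' viewed as an edge set is a minimum-size Force Path Cut solution for (G, p*). -/

import Mathlib

/-- `E'` is a Force Path Cut solution for the undirected graph `G` with unit edge
weights and target path `p`. -/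
def FPCSol {V : Type*} (G : SimpleGraph V) {s t : V} (p : G.Walk s t)
    (E' : Set (Sym2 V)) : Prop :=
  E' ⊆ G.edgeSet ∧ (∀ e ∈ p.edges, e ∉ E') ∧
    ∀ q : (G.deleteEdges E').Walk s t, q.IsPath →
      q.mapLe (SimpleGraph.deleteEdges_le E') ≠ p → p.length < q.length

/-- `V'` is a Force Path Remove solution for the unweighted graph `H` and target path
`p`: `V'` avoids the vertices of `p`, and in the subgraph induced on the complement of
`V'` (modelled by deleting every edge incident to a vertex of `V'`) the path `p` is
strictly shorter than every other path between its endpoints. -/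
def FPRSol {X : Type*} (H : SimpleGraph X) {a b : X} (p : H.Walk a b)
    (V' : Set X) : Prop :=
  (∀ v ∈ V', v ∉ p.support) ∧
    ∀ q : (H.deleteEdges {e : Sym2 X | ∃ v ∈ V', v ∈ e}).Walk a b, q.IsPath →
      q.mapLe (SimpleGraph.deleteEdges_le _) ≠ p → p.length < q.length

/-- The adjacency relation of the augmented line graph of `G` with respect to `s` and
`t`.  Its vertices are the edges of `G` (as elements of `Sym2 V`) together with two new
vertices `ŝ = Sum.inr false` and `t̂ = Sum.inr true`; two edges of `G` are adjacent iff
they are distinct and share an endpoint, `ŝ` is adjacent to exactly the edges incident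
to `s`, and `t̂` to exactly the edges incident to `t`. -/
def lgAdj {V : Type*} (G : SimpleGraph V) (s t : V) :
    (Sym2 V ⊕ Bool) → (Sym2 V ⊕ Bool) → Prop
  | Sum.inl e, Sum.inl f => e ∈ G.edgeSet ∧ f ∈ G.edgeSet ∧ e ≠ f ∧ ∃ v, v ∈ e ∧ v ∈ f
  | Sum.inl e, Sum.inr b => e ∈ G.edgeSet ∧ (if b then t else s) ∈ e
  | Sum.inr b, Sum.inl e => e ∈ G.edgeSet ∧ (if b then t else s) ∈ e
  | Sum.inr _, Sum.inr _ => False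

/-- The augmented line graph of `G` with respect to `s` and `t`. -/
def lineGraph {V : Type*} (G : SimpleGraph V) (s t : V) :
    SimpleGraph (Sym2 V ⊕ Bool) where
  Adj := lgAdj G s t
  symm := ⟨by
    rintro (e | b) (f | b') h <;> simp only [lgAdj] at h ⊢ <;> tauto⟩
  loopless := ⟨by
    rintro (e | b) h <;> simp only [lgAdj] at h
    exact h.2.2.1 rfl⟩

/-!
Deleting the vertices `Sum.inl '' E'` from the augmented line graph of `G` gives the augmented
line graph of `G − E'`. An `s`–`t` path in `G − E'` lifts to the `ŝ`–`t̂` path through its edges,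
which is one step longer. Conversely, consecutive vertices of an `ŝ`–`t̂` path in the line graph
are edges of `G` sharing an endpoint, and walking through the shared endpoints gives an
`s`–`t` walk in `G − E'` at least one step shorter, with equality only if the walk traverses
exactly those edges. Hence `E' ↦ Sum.inl '' E'` is a size-preserving bijection between the
Force Path Cut solutions and the Force Path Remove solutions made of edge vertices.
-/

open SimpleGraph (Walk)

section ForcePathLineGraph

variable {V : Type*}

theorem SimpleGraph.exists_walk_of_mem_edgeSet {G : SimpleGraph V} {e : Sym2 V}
    (he : e ∈ G.edgeSet) {a b : V}
    (ha : a ∈ e) (hb : b ∈ e) :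
    ∃ W : G.Walk a b, W.length ≤ 1 ∧ (W.length = 1 → W.edges = [e]) := by
  by_cases hab : a = b
  · subst hab
    exact ⟨Walk.nil, by simp, by simp⟩
  · obtain rfl : e = s(a, b) := (Sym2.mem_and_mem_iff hab).mp ⟨ha, hb⟩
    have hadj : G.Adj a b := he
    exact ⟨hadj.toWalk, by simp, fun _ => hadj.edges_toWalk⟩

section ForcePathCut

variable [DecidableEq V] {G : SimpleGraph V} {s t : V} {p : G.Walk s t} {E' : Set (Sym2 V)}

theorem FPCSol.length_le (h : FPCSol G p E') (W : (G.deleteEdges E').Walk s t) :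
    p.length ≤ W.length := by
  by_cases hb : W.bypass.mapLe (SimpleGraph.deleteEdges_le E') = p
  · rw [← hb, Walk.length_mapLe]
    exact W.length_bypass_le_length
  · exact ((h.2.2 _ W.bypass_isPath hb).trans_le W.length_bypass_le_length).le

theorem FPCSol.mapLe_eq_of_length_le (h : FPCSol G p E') (W : (G.deleteEdges E').Walk s t)
    (hW : W.length ≤ p.length) : W.mapLe (SimpleGraph.deleteEdges_le E') = p := by
  have hpath : W.IsPath := by
    rw [← W.bypass_eq_self_of_length_le_length_bypass (hW.trans (h.length_le _))]
    exact W.bypass_isPath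
  by_contra hne
  exact (h.2.2 W hpath hne).not_ge hW

end ForcePathCut

def augmentedSupport (l : List (Sym2 V)) : List (Sym2 V ⊕ Bool) :=
  Sum.inr false :: (l.map Sum.inl ++ [Sum.inr true])

theorem augmentedSupport_injective :
    Function.Injective (augmentedSupport : List (Sym2 V) → List (Sym2 V ⊕ Bool)) := by
  intro l l' h
  simpa [augmentedSupport, List.map_inj_right Sum.inl_injective] using h

theorem nodup_augmentedSupport {l : List (Sym2 V)} (hl : l.Nodup) :
    (augmentedSupport l).Nodup := by
  simp [augmentedSupport, List.nodup_append, hl.map Sum.inl_injective]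

theorem SimpleGraph.Walk.length_eq_of_support_eq_augmentedSupport
    {H : SimpleGraph (Sym2 V ⊕ Bool)} {x y : Sym2 V ⊕ Bool} {q : H.Walk x y}
    {l : List (Sym2 V)} (hq : q.support = augmentedSupport l) : q.length = l.length + 1 := by
  have := q.length_support
  simp [hq, augmentedSupport] at this
  omega

section LineGraph

variable {G : SimpleGraph V} {s t : V}

@[simp]
theorem lineGraph_adj_inl_inl {e f : Sym2 V} :
    (lineGraph G s t).Adj (.inl e) (.inl f) ↔
      e ∈ G.edgeSet ∧ f ∈ G.edgeSet ∧ e ≠ f ∧ ∃ v, v ∈ e ∧ v ∈ f :=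
  Iff.rfl

@[simp]
theorem lineGraph_adj_inl_inr {e : Sym2 V} {b : Bool} :
    (lineGraph G s t).Adj (.inl e) (.inr b) ↔ e ∈ G.edgeSet ∧ (if b then t else s) ∈ e :=
  Iff.rfl

@[simp]
theorem lineGraph_adj_inr_inl {e : Sym2 V} {b : Bool} :
    (lineGraph G s t).Adj (.inr b) (.inl e) ↔ e ∈ G.edgeSet ∧ (if b then t else s) ∈ e :=
  Iff.rfl

@[simp]
theorem lineGraph_not_adj_inr_inr {b b' : Bool} : ¬ (lineGraph G s t).Adj (.inr b) (.inr b') :=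
  id

theorem lineGraph_deleteEdges (E' : Set (Sym2 V)) :
    (lineGraph G s t).deleteEdges {x | ∃ v ∈ Sum.inl '' E', v ∈ x} =
      lineGraph (G.deleteEdges E') s t := by
  ext (e | b) (f | b') <;> simp [SimpleGraph.deleteEdges_adj] <;> grind

theorem exists_walk_of_lineGraph_walk :
    ∀ {e : Sym2 V} {y : Sym2 V ⊕ Bool} (q : (lineGraph G s t).Walk (.inl e) y),
      y = .inr true → .inr false ∉ q.support → ∀ {a : V}, a ∈ e →
      ∃ W : G.Walk a t, W.length ≤ q.length ∧
        (W.length = q.length → q.support = W.edges.map .inl ++ [.inr true])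
  | _, _, .nil, hy, _, _, _ => by simp at hy
  | _, _, .cons (v := .inr false) _ q, _, hs, _, _ => by simp at hs
  | _, _, .cons (v := .inr true) hadj q, hy, _, _, ha => by
    obtain ⟨he, hte⟩ := lineGraph_adj_inl_inr.mp hadj
    obtain ⟨W, hW, hWe⟩ := SimpleGraph.exists_walk_of_mem_edgeSet he ha hte
    subst hy
    refine ⟨W, by simp; omega, fun hlen => ?_⟩
    simp only [Walk.length_cons] at hlen
    obtain rfl : q = .nil := by
      rw [Walk.eq_nil_iff_nil, ← Walk.length_eq_zero_iff]; omega
    simp [hWe (by simpa using hlen)]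
  | _, _, .cons (v := .inl f) hadj q, hy, hs, _, ha => by
    obtain ⟨he, -, -, z, hze, hzf⟩ := lineGraph_adj_inl_inl.mp hadj
    obtain ⟨W₀, hW₀, hW₀e⟩ := SimpleGraph.exists_walk_of_mem_edgeSet he ha hze
    obtain ⟨W, hW, hWe⟩ := exists_walk_of_lineGraph_walk q hy (fun h => hs (by simp [h])) hzf
    refine ⟨W₀.append W, by simp; omega, fun hlen => ?_⟩
    simp only [Walk.length_append, Walk.length_cons] at hlen
    simp [hWe (by omega), hW₀e (by omega)]

theorem exists_walk_of_lineGraph_isPath {q : (lineGraph G s t).Walk (.inr false) (.inr true)}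
    (hq : q.IsPath) :
    ∃ W : G.Walk s t, W.length < q.length ∧
      (W.length + 1 = q.length → q.support = augmentedSupport W.edges) := by
  match q, hq with
  | .cons (v := .inr _) hadj _, _ => exact absurd hadj lineGraph_not_adj_inr_inr
  | .cons (v := .inl _) hadj q, hq =>
    rw [Walk.cons_isPath_iff] at hq
    obtain ⟨W, hW, hWe⟩ := exists_walk_of_lineGraph_walk q rfl hq.2
      (lineGraph_adj_inr_inl.mp hadj).2
    refine ⟨W, by simp; omega, fun hlen => ?_⟩
    simp [augmentedSupport, hWe (by simpa using hlen)]

theorem exists_lineGraph_walk_of_walk :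
    ∀ {a b : V} (q : G.Walk a b) {e : Sym2 V}, b = t → e ∈ G.edgeSet → a ∈ e →
      (e :: q.edges).Nodup →
      ∃ W : (lineGraph G s t).Walk (.inl e) (.inr true),
        W.support = (e :: q.edges).map .inl ++ [.inr true]
  | _, _, .nil, _, hb, he, ha, _ =>
    ⟨Walk.cons (lineGraph_adj_inl_inr (b := true) |>.mpr ⟨he, hb ▸ ha⟩) .nil, rfl⟩
  | _, _, .cons hadj q, e, hb, he, ha, hnd => by
    rw [Walk.edges_cons, List.nodup_cons, List.mem_cons, not_or] at hnd
    obtain ⟨W, hW⟩ := exists_lineGraph_walk_of_walk q hb hadj (Sym2.mem_mk_right _ _) hnd.2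
    exact ⟨Walk.cons
      (lineGraph_adj_inl_inl.mpr ⟨he, hadj, hnd.1.1, _, ha, Sym2.mem_mk_left _ _⟩) W, by simp [hW]⟩

theorem exists_lineGraph_walk_of_isTrail (hst : s ≠ t) {q : G.Walk s t} (hq : q.IsTrail) :
    ∃ W : (lineGraph G s t).Walk (.inr false) (.inr true),
      W.support = augmentedSupport q.edges := by
  cases q with
  | nil => exact absurd rfl hst
  | cons hadj q =>
    obtain ⟨W, hW⟩ := exists_lineGraph_walk_of_walk q rfl hadj (Sym2.mem_mk_right _ _)
      (by simpa using hq.edges_nodup)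
    exact ⟨Walk.cons (lineGraph_adj_inr_inl.mpr ⟨hadj, Sym2.mem_mk_left _ _⟩) W,
      by simp [hW, augmentedSupport]⟩

end LineGraph

section Reduction

variable {G : SimpleGraph V} {s t : V} {p : G.Walk s t}
  {p' : (lineGraph G s t).Walk (.inr false) (.inr true)} {E' : Set (Sym2 V)}

theorem FPCSol.fprSol_image [DecidableEq V] (hp' : p'.support = augmentedSupport p.edges)
    (h : FPCSol G p E') : FPRSol (lineGraph G s t) p' (Sum.inl '' E') := by
  refine ⟨?_, fun q hq hne => ?_⟩
  · rintro _ ⟨e, he, rfl⟩ hmem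
    simp [hp', augmentedSupport] at hmem
    exact h.2.1 e hmem he
  · obtain ⟨W, hWq, hWe⟩ :=
      exists_walk_of_lineGraph_isPath ((Walk.isPath_mapLe (lineGraph_deleteEdges E').le).mpr hq)
    rw [Walk.length_mapLe] at hWq hWe
    rw [Walk.length_eq_of_support_eq_augmentedSupport hp', Walk.length_edges]
    by_contra! hle
    have hpW := h.length_le W
    have hW := h.mapLe_eq_of_length_le W (by omega)
    apply hne
    apply Walk.ext_support
    rw [Walk.support_mapLe_eq_support, hp', ← hW, Walk.edges_mapLe_eq_edges,
      ← hWe (by omega), Walk.support_mapLe_eq_support]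

theorem FPRSol.fpcSol_of_image (hst : s ≠ t) (hp' : p'.support = augmentedSupport p.edges)
    (hE' : E' ⊆ G.edgeSet) (h : FPRSol (lineGraph G s t) p' (Sum.inl '' E')) :
    FPCSol G p E' := by
  refine ⟨hE', fun e he he' => h.1 (.inl e) ⟨e, he', rfl⟩ (by simp [hp', augmentedSupport, he]),
    fun q hq hne => ?_⟩
  obtain ⟨W, hW⟩ := exists_lineGraph_walk_of_isTrail hst hq.isTrail
  let W' := W.mapLe (lineGraph_deleteEdges E').ge
  have hW' : W'.support = augmentedSupport q.edges := by
    rw [Walk.support_mapLe_eq_support, hW]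
  clear_value W'
  have hlt := h.2 W' (Walk.isPath_def _ |>.mpr (hW' ▸ nodup_augmentedSupport hq.edges_nodup))
    fun heq => hne <| Walk.edges_injective <| augmentedSupport_injective <| by
      rw [Walk.edges_mapLe_eq_edges, ← hW', ← hp', ← heq, Walk.support_mapLe_eq_support]
  rw [Walk.length_eq_of_support_eq_augmentedSupport hp',
    Walk.length_eq_of_support_eq_augmentedSupport hW'] at hlt
  simpa only [Walk.length_edges, add_lt_add_iff_right] using hlt

end Reduction

end ForcePathLineGraph

theorem stmt15_general {V : Type*} [DecidableEq V]
    (G : SimpleGraph V) (s t : V) (hst : s ≠ t)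
    (pstar : G.Walk s t)
    (phat : (lineGraph G s t).Walk (Sum.inr false) (Sum.inr true))
    (hphat : phat.support
        = Sum.inr false :: (pstar.edges.map Sum.inl ++ [Sum.inr true])) :
    sInf {n : ℕ | ∃ Vhat' : Set (Sym2 V ⊕ Bool),
        Vhat' ⊆ Sum.inl '' G.edgeSet ∧ FPRSol (lineGraph G s t) phat Vhat' ∧
          Vhat'.ncard = n}
      = sInf {n : ℕ | ∃ E' : Set (Sym2 V), FPCSol G pstar E' ∧ E'.ncard = n} ∧
    ∀ Vhat' : Set (Sym2 V ⊕ Bool), Vhat' ⊆ Sum.inl '' G.edgeSet →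
      FPRSol (lineGraph G s t) phat Vhat' →
      Vhat'.ncard = sInf {n : ℕ | ∃ Vhat'' : Set (Sym2 V ⊕ Bool),
          Vhat'' ⊆ Sum.inl '' G.edgeSet ∧ FPRSol (lineGraph G s t) phat Vhat'' ∧
            Vhat''.ncard = n} →
      (FPCSol G pstar {e : Sym2 V | Sum.inl e ∈ Vhat'} ∧
        {e : Sym2 V | Sum.inl e ∈ Vhat'}.ncard
          = sInf {n : ℕ | ∃ E' : Set (Sym2 V), FPCSol G pstar E' ∧ E'.ncard = n}) := by
  have hcard (E' : Set (Sym2 V)) : (Sum.inl '' E' : Set (Sym2 V ⊕ Bool)).ncard = E'.ncard :=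
    Set.ncard_image_of_injective _ Sum.inl_injective
  have hsizes : {n : ℕ | ∃ Vhat' : Set (Sym2 V ⊕ Bool),
        Vhat' ⊆ Sum.inl '' G.edgeSet ∧ FPRSol (lineGraph G s t) phat Vhat' ∧ Vhat'.ncard = n}
      = {n : ℕ | ∃ E' : Set (Sym2 V), FPCSol G pstar E' ∧ E'.ncard = n} := by
    ext n
    constructor
    · rintro ⟨_, hsub, hFPR, rfl⟩
      obtain ⟨E', hE', rfl⟩ := Set.subset_image_iff.mp hsub
      exact ⟨E', hFPR.fpcSol_of_image hst hphat hE', (hcard E').symm⟩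
    · rintro ⟨E', hFPC, rfl⟩
      exact ⟨_, Set.image_mono hFPC.1, hFPC.fprSol_image hphat, hcard E'⟩
  refine ⟨congrArg sInf hsizes, fun _ hsub hFPR hmin => ?_⟩
  obtain ⟨E', hE', rfl⟩ := Set.subset_image_iff.mp hsub
  have hpre : {e | (Sum.inl e : Sym2 V ⊕ Bool) ∈ Sum.inl '' E'} = E' :=
    Set.preimage_image_eq E' Sum.inl_injective
  rw [← hsizes, ← hmin, hcard, hpre]
  exact ⟨hFPR.fpcSol_of_image hst hphat hE', rfl⟩

/-- The minimum size of a Force Path Remove solution for the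
augmented line graph `(Ĝ, p̂*)` equals the minimum size of a Force Path Cut solution
for `(G, p*)` (assuming a Force Path Cut solution exists); in particular, every
minimum-size Force Path Remove solution for `(Ĝ, p̂*)`, viewed as an edge set of `G`,
is a minimum-size Force Path Cut solution for `(G, p*)`. -/
theorem stmt15 {V : Type*} [Fintype V] [DecidableEq V]
    (G : SimpleGraph V) (s t : V) (hst : s ≠ t)
    (pstar : G.Walk s t) (hpstar : pstar.IsPath)
    (phat : (lineGraph G s t).Walk (Sum.inr false) (Sum.inr true))
    (hphat : phat.support
        = Sum.inr false :: (pstar.edges.map Sum.inl ++ [Sum.inr true]))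
    (hex : ∃ E' : Set (Sym2 V), FPCSol G pstar E') :
    sInf {n : ℕ | ∃ Vhat' : Set (Sym2 V ⊕ Bool),
        Vhat' ⊆ Sum.inl '' G.edgeSet ∧ FPRSol (lineGraph G s t) phat Vhat' ∧
          Vhat'.ncard = n}
      = sInf {n : ℕ | ∃ E' : Set (Sym2 V), FPCSol G pstar E' ∧ E'.ncard = n} ∧
    ∀ Vhat' : Set (Sym2 V ⊕ Bool), Vhat' ⊆ Sum.inl '' G.edgeSet →
      FPRSol (lineGraph G s t) phat Vhat' →
      Vhat'.ncard = sInf {n : ℕ | ∃ Vhat'' : Set (Sym2 V ⊕ Bool),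
          Vhat'' ⊆ Sum.inl '' G.edgeSet ∧ FPRSol (lineGraph G s t) phat Vhat'' ∧
            Vhat''.ncard = n} →
      (FPCSol G pstar {e : Sym2 V | Sum.inl e ∈ Vhat'} ∧
        {e : Sym2 V | Sum.inl e ∈ Vhat'}.ncard
          = sInf {n : ℕ | ∃ E' : Set (Sym2 V), FPCSol G pstar E' ∧ E'.ncard = n}) :=
  stmt15_general G s t hst pstar phat hphat
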